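/- arXiv:2504.08545 — 2 statements merged into one kernel-verified Lean document; each statement's English description precedes it below -/
import Mathlib

section
/- Let L ∈ ℝ^{n×r} with Lᵀ L = I, and let X̂, Ŷ ∈ ℝ^{n×(m−1)} be such that Lᵀ X̂ X̂ᵀ L is invertible. Then M* = Lᵀ Ŷ X̂ᵀ L (Lᵀ X̂ X̂ᵀ L)⁻¹ minimizes over M ∈ ℝ^{r×r} the function F(M) = ‖(I − L Lᵀ) Y + L Lᵀ Ŷ − L M Lᵀ X̂‖_F². -/
/-!
Write `R₀ = (I - L Lᵀ) Y + L Lᵀ Ŷ`, so that `F(M) = ‖R₀ - L M (Lᵀ X̂)‖_F²` is a linear least-squares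
problem in `M`. Since `Lᵀ L = I` gives `Lᵀ R₀ = Lᵀ Ŷ`, the residual at `M*` satisfies the normal
equation `Lᵀ (R₀ - L M* Lᵀ X̂) X̂ᵀ L = Lᵀ Ŷ X̂ᵀ L - M* (Lᵀ X̂ X̂ᵀ L) = 0`. Hence the residual is
Frobenius-orthogonal to every `L (M* - M) Lᵀ X̂`, and Pythagoras gives `F(M*) ≤ F(M)`.
-/

open Matrix

noncomputable def frobSq {α β : Type*} [Fintype α] [Fintype β]
    (A : Matrix α β ℝ) : ℝ := Matrix.trace (Aᵀ * A)

section Frobenius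

variable {ι κ ρ σ : Type*} [Fintype ι] [Fintype κ] [Fintype ρ] [Fintype σ]

lemma frobSq_nonneg (A : Matrix ι κ ℝ) : 0 ≤ frobSq A :=
  Finset.sum_nonneg fun _ _ => Finset.sum_nonneg fun _ _ => mul_self_nonneg _

lemma frobSq_add (A B : Matrix ι κ ℝ) :
    frobSq (A + B) = frobSq A + 2 * trace (Aᵀ * B) + frobSq B := by
  have hsymm : trace (Bᵀ * A) = trace (Aᵀ * B) := by
    rw [← trace_transpose, transpose_mul, transpose_transpose]
  simp only [frobSq, transpose_add, Matrix.add_mul, Matrix.mul_add, trace_add, hsymm]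
  ring

lemma frobSq_le_frobSq_add_of_trace_eq_zero (A B : Matrix ι κ ℝ) (h : trace (Aᵀ * B) = 0) :
    frobSq A ≤ frobSq (A + B) := by
  rw [frobSq_add, h]
  linarith [frobSq_nonneg B]

lemma frobSq_sub_mul_mul_le_of_normal_eq (R : Matrix ι κ ℝ) (P : Matrix ι ρ ℝ)
    (Q : Matrix σ κ ℝ) (M₀ M : Matrix ρ σ ℝ) (hnormal : Pᵀ * (R - P * M₀ * Q) * Qᵀ = 0) :
    frobSq (R - P * M₀ * Q) ≤ frobSq (R - P * M * Q) := by
  have hsplit : R - P * M * Q = (R - P * M₀ * Q) + P * (M₀ - M) * Q := by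
    simp only [Matrix.mul_sub, Matrix.sub_mul]
    abel
  have hcross : trace ((R - P * M₀ * Q)ᵀ * (P * (M₀ - M) * Q)) = 0 := by
    have horth : Q * (R - P * M₀ * Q)ᵀ * P = 0 := by
      simpa only [transpose_mul, transpose_transpose, transpose_zero, Matrix.mul_assoc]
        using congrArg transpose hnormal
    rw [← Matrix.mul_assoc, trace_mul_comm, ← Matrix.mul_assoc, ← Matrix.mul_assoc, horth,
      Matrix.zero_mul, trace_zero]
  rw [hsplit]
  exact frobSq_le_frobSq_add_of_trace_eq_zero _ _ hcross

end Frobenius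

lemma transpose_mul_complement_proj_add_proj {n r k : Type*} [Fintype n] [Fintype r]
    [DecidableEq n] [DecidableEq r] (L : Matrix n r ℝ) (hL : Lᵀ * L = 1) (Y Yh : Matrix n k ℝ) :
    Lᵀ * ((1 - L * Lᵀ) * Y + L * Lᵀ * Yh) = Lᵀ * Yh := by
  simp only [Matrix.mul_add, Matrix.sub_mul, Matrix.mul_sub, Matrix.one_mul, ← Matrix.mul_assoc,
    hL, sub_self, zero_add]

/-- M* minimizes M ↦ ‖(I − L Lᵀ) Y + L Lᵀ Ŷ − L M Lᵀ X̂‖_F². -/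
theorem omdc_optimal_M (n r m : ℕ)
    (Y Xh Yh : Matrix (Fin n) (Fin (m - 1)) ℝ)
    (L : Matrix (Fin n) (Fin r) ℝ) (hL : Lᵀ * L = 1)
    (hinv : IsUnit (Lᵀ * Xh * Xhᵀ * L)) :
    ∀ M : Matrix (Fin r) (Fin r) ℝ,
      frobSq (((1 : Matrix (Fin n) (Fin n) ℝ) - L * Lᵀ) * Y + L * Lᵀ * Yh -
        L * (Lᵀ * Yh * Xhᵀ * L * (Lᵀ * Xh * Xhᵀ * L)⁻¹) * Lᵀ * Xh) ≤
      frobSq (((1 : Matrix (Fin n) (Fin n) ℝ) - L * Lᵀ) * Y + L * Lᵀ * Yh -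
        L * M * Lᵀ * Xh) := by
  intro M
  set R₀ := ((1 : Matrix (Fin n) (Fin n) ℝ) - L * Lᵀ) * Y + L * Lᵀ * Yh
  set G := Lᵀ * Xh * Xhᵀ * L
  set M₀ := Lᵀ * Yh * Xhᵀ * L * G⁻¹
  have hM₀G : M₀ * (Lᵀ * Xh) * (Xhᵀ * L) = Lᵀ * Yh * (Xhᵀ * L) := by
    simpa only [M₀, G, Matrix.mul_assoc] using
      nonsing_inv_mul_cancel_right G (Lᵀ * Yh * Xhᵀ * L) ((isUnit_iff_isUnit_det G).mp hinv)
  have hnormal : Lᵀ * (R₀ - L * M₀ * (Lᵀ * Xh)) * (Lᵀ * Xh)ᵀ = 0 := by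
    have hLR₀ : Lᵀ * R₀ = Lᵀ * Yh := transpose_mul_complement_proj_add_proj L hL Y Yh
    have hLLM₀ : Lᵀ * (L * M₀ * (Lᵀ * Xh)) = M₀ * (Lᵀ * Xh) := by
      simp only [← Matrix.mul_assoc, hL, Matrix.one_mul]
    rw [Matrix.mul_sub, hLR₀, hLLM₀, Matrix.sub_mul, transpose_mul, transpose_transpose, hM₀G,
      sub_self]
  simpa only [Matrix.mul_assoc] using
    frobSq_sub_mul_mul_le_of_normal_eq R₀ L (Lᵀ * Xh) M₀ M hnormal
end

section
/- Let S ∈ ℝ^{n×m} with n ≥ m, and let S = Q̄ R̄ be a QR factorization with Q̄ ∈ ℝ^{n×m}, Q̄ᵀ Q̄ = I. Write X = S[:, 0:m−1], Y = S[:, 1:m], X̄ = R̄[:, 0:m−1], Ȳ = R̄[:, 1:m]. Then for every L̄ ∈ ℝ^{m×r} with L̄ᵀ L̄ = I, and all M ∈ ℝ^{r×r}, P ∈ ℝ^{r×p}, U ∈ ℝ^{p×(m−1)}: ‖Ȳ − L̄ M L̄ᵀ X̄ − L̄ P U‖_F = ‖Y − (Q̄L̄) M (Q̄L̄)ᵀ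 X − (Q̄L̄) P U‖_F, and (Q̄L̄)ᵀ(Q̄L̄) = I. -/
/-! Multiplying by a matrix with orthonormal columns preserves the Frobenius norm. Substituting
`S = Q̄ R̄` and `L = Q̄ L̄` into the full residual and cancelling `Q̄ᵀ Q̄ = 1` in the middle term
shows that the full residual is `Q̄` times the reduced one. -/

open Matrix

noncomputable def frob {α β : Type*} [Fintype α] [Fintype β]
    (A : Matrix α β ℝ) : ℝ := Real.sqrt (Matrix.trace (Aᵀ * A))

section Orthonormal

variable {ι κ μ ν R : Type*} [Fintype ι] [Fintype κ] [DecidableEq κ] [CommRing R]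

theorem transpose_mul_mul_transpose_mul_eq_one [DecidableEq μ] {Q : Matrix ι κ R}
    {L : Matrix κ μ R} (hQ : Qᵀ * Q = 1) (hL : Lᵀ * L = 1) : (Q * L)ᵀ * (Q * L) = 1 := by
  rw [transpose_mul, Matrix.mul_assoc, ← Matrix.mul_assoc Qᵀ, hQ, Matrix.one_mul, hL]

theorem frob_mul_of_transpose_mul_eq_one [Fintype ν] {Q : Matrix ι κ ℝ} (hQ : Qᵀ * Q = 1)
    (A : Matrix κ ν ℝ) : frob (Q * A) = frob A := by
  rw [frob, frob, transpose_mul, Matrix.mul_assoc, ← Matrix.mul_assoc Qᵀ, hQ, Matrix.one_mul]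

theorem mul_mul_mul_transpose_mul_mul_of_transpose_mul_eq_one [Fintype μ] {Q : Matrix ι κ R}
    (hQ : Qᵀ * Q = 1) (L : Matrix κ μ R) (M : Matrix μ μ R) (X : Matrix κ ν R) :
    Q * L * M * (Q * L)ᵀ * (Q * X) = Q * (L * M * Lᵀ * X) := by
  calc Q * L * M * (Q * L)ᵀ * (Q * X) = Q * (L * M * Lᵀ) * (Qᵀ * Q) * X := by
        simp only [transpose_mul, Matrix.mul_assoc]
    _ = Q * (L * M * Lᵀ * X) := by rw [hQ, Matrix.mul_one, Matrix.mul_assoc]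

end Orthonormal

theorem submatrix_id_mul {ι κ μ ν R : Type*} [Fintype κ] [Semiring R]
    (A : Matrix ι κ R) (B : Matrix κ μ R) (f : ν → μ) :
    (A * B).submatrix id f = A * B.submatrix id f := by
  rw [submatrix_mul A B id id f Function.bijective_id, submatrix_id_id]

/-- equivalence of the OMDc problem and its reduced m-dimensional version
obtained from a thin QR factorization S = Q̄ R̄. -/
theorem omdc_qr_reduction (n m r p : ℕ)
    (S : Matrix (Fin n) (Fin (m + 1)) ℝ)
    (Qb : Matrix (Fin n) (Fin (m + 1)) ℝ)
    (Rb : Matrix (Fin (m + 1)) (Fin (m + 1)) ℝ)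
    (hQR : S = Qb * Rb) (hQb : Qbᵀ * Qb = 1)
    (Lb : Matrix (Fin (m + 1)) (Fin r) ℝ) (hLb : Lbᵀ * Lb = 1)
    (M : Matrix (Fin r) (Fin r) ℝ) (P : Matrix (Fin r) (Fin p) ℝ)
    (U : Matrix (Fin p) (Fin m) ℝ) :
    frob (Rb.submatrix id Fin.succ - Lb * M * Lbᵀ * Rb.submatrix id Fin.castSucc -
        Lb * P * U) =
      frob (S.submatrix id Fin.succ -
        (Qb * Lb) * M * (Qb * Lb)ᵀ * S.submatrix id Fin.castSucc -
        (Qb * Lb) * P * U) ∧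
    (Qb * Lb)ᵀ * (Qb * Lb) = 1 := by
  refine ⟨?_, transpose_mul_mul_transpose_mul_eq_one hQb hLb⟩
  subst hQR
  have hresidual : Qb * Rb.submatrix id Fin.succ -
      Qb * Lb * M * (Qb * Lb)ᵀ * (Qb * Rb.submatrix id Fin.castSucc) - Qb * Lb * P * U =
      Qb * (Rb.submatrix id Fin.succ - Lb * M * Lbᵀ * Rb.submatrix id Fin.castSucc -
        Lb * P * U) := by
    rw [mul_mul_mul_transpose_mul_mul_of_transpose_mul_eq_one hQb, Matrix.mul_sub,
      Matrix.mul_sub, Matrix.mul_assoc Qb Lb P, Matrix.mul_assoc Qb]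
  rw [submatrix_id_mul, submatrix_id_mul, hresidual, frob_mul_of_transpose_mul_eq_one hQb]
end
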